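/- Constant-depth lower bound on trace distance: let ρ = U|0ⁿ⟩⟨0ⁿ|U† and σ = V|0ⁿ⟩⟨0ⁿ|V† with U, V of depth at most k (k constant), and O = (1/n)∑ᵢ Zᵢ. If |tr(Oρ) − tr(Oσ)| > ε, then (1/2)‖ρ − σ‖₁ ≥ 1 − C_k/(n ε²) for a constant C_k depending only on k. -/

import Mathlib

open scoped Matrix ComplexOrder

/-- Operators on `n` qubits, as matrices indexed by computational basis states. -/
abbrev QOp (n : ℕ) := Matrix (Fin n → Fin 2) (Fin n → Fin 2) ℂ

/-- `A` acts non-trivially only on the qubits in `S`, i.e. `A = A_S ⊗ I` on the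
complement of `S`. -/
def SupportedOn {n : ℕ} (A : QOp n) (S : Finset (Fin n)) : Prop :=
  ∃ f : (S → Fin 2) → (S → Fin 2) → ℂ,
    ∀ x y, A x y = f (fun i => x i.1) (fun i => y i.1) *
      (if ∀ i, i ∉ S → x i = y i then 1 else 0)

/-- `U` is a single layer of two-qubit gates: a product of unitaries acting on
pairwise disjoint sets of at most two qubits, recorded in the list `gates`. -/
def IsLayer {n : ℕ} (U : QOp n) (gates : List (QOp n × Finset (Fin n))) : Prop :=
  U = (gates.map Prod.fst).prod ∧
  (∀ g ∈ gates, g.1 ∈ Matrix.unitaryGroup (Fin n → Fin 2) ℂ ∧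
      SupportedOn g.1 g.2 ∧ g.2.card ≤ 2) ∧
  gates.Pairwise (fun g h => Disjoint g.2 h.2)

/-- `U` is a depth-`k` quantum circuit: a product of `k` layers of two-qubit gates. -/
def HasDepth {n : ℕ} (U : QOp n) (k : ℕ) : Prop :=
  ∃ layers : Fin k → QOp n, U = (List.ofFn layers).prod ∧
    ∀ j, ∃ gates, IsLayer (layers j) gates

/-- Trace norm of a complex matrix: the trace of `√(AᴴA)` (the sum of singular values). -/
noncomputable def traceNorm {d : Type*} [Fintype d] [DecidableEq d] (A : Matrix d d ℂ) : ℝ :=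
  (((Matrix.posSemidef_conjTranspose_mul_self A).1.eigenvectorUnitary.1 *
    Matrix.diagonal (((↑) : ℝ → ℂ) ∘ (√·) ∘ (Matrix.posSemidef_conjTranspose_mul_self A).1.eigenvalues) *
    (star (Matrix.posSemidef_conjTranspose_mul_self A).1.eigenvectorUnitary : Matrix d d ℂ)).trace).re

/-- The Pauli `Z` operator on qubit `i` (tensored with identity elsewhere). -/
def Zmat (n : ℕ) (i : Fin n) : Matrix (Fin n → Fin 2) (Fin n → Fin 2) ℂ :=
  Matrix.of fun b c => if b = c then (if b i = 0 then 1 else -1) else 0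

/-!
Measuring both states in the computational basis gives distributions `p_U`, `p_V` whose total
variation distance is a lower bound for the trace distance. In the Heisenberg picture `Uᴴ Zᵢ U`
acts only on the depth-`k` lightcone of qubit `i`, which has at most `3 ^ k` qubits. Observables
on disjoint lightcones are uncorrelated in `U|0ⁿ⟩`, and at most `9 ^ k n` pairs of lightcones
meet, so `O` has variance at most `2 · 9 ^ k / n` in either state. Thresholding `O` at the
midpoint of its two means then tells the states apart except with probability
`O(9 ^ k / (n ε²))` (Chebyshev), which gives `C_k = 16 · 9 ^ k`.
-/

namespace Matrix.IsHermitian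

variable {d : Type*} [Fintype d] [DecidableEq d] {A : Matrix d d ℂ}

lemma trace_cfc (hA : A.IsHermitian) (f : ℝ → ℝ) :
    (hA.cfc f).trace = ∑ i, (f (hA.eigenvalues i) : ℂ) := by
  rw [Matrix.IsHermitian.cfc, Unitary.conjStarAlgAut_apply, Matrix.trace_mul_cycle,
    Unitary.coe_star_mul_self, Matrix.one_mul, Matrix.trace_diagonal]
  rfl

lemma traceNorm_eq_sum_abs_eigenvalues (hA : A.IsHermitian) :
    traceNorm A = ∑ i, |hA.eigenvalues i| := by
  have hsq : Aᴴ * A = cfc (fun x : ℝ => x ^ 2) A := by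
    rw [cfc_pow_id A 2 hA.isSelfAdjoint, hA.eq, sq]
  have habs : cfc Real.sqrt (Aᴴ * A) = hA.cfc (|·|) := by
    rw [hsq, ← cfc_comp Real.sqrt (fun x : ℝ => x ^ 2) A hA.isSelfAdjoint, ← hA.cfc_eq]
    congr 1
    funext x
    exact Real.sqrt_sq_eq_abs x
  have hdef : traceNorm A = (cfc Real.sqrt (Aᴴ * A)).trace.re := by
    rw [traceNorm, (posSemidef_conjTranspose_mul_self A).1.cfc_eq]; rfl
  rw [hdef, habs, trace_cfc, Complex.re_sum]
  simp only [Complex.ofReal_re]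

lemma re_diag_eq_sum_eigenvalues (hA : A.IsHermitian) (x : d) :
    (A x x).re = ∑ i, hA.eigenvalues i * Complex.normSq (hA.eigenvectorUnitary.1 x i) := by
  conv_lhs => rw [hA.spectral_theorem, Unitary.conjStarAlgAut_apply, Matrix.mul_apply]
  simp only [Matrix.mul_diagonal, Matrix.star_apply, Complex.re_sum]
  refine Finset.sum_congr rfl fun i _ => ?_
  rw [Function.comp_apply, RCLike.star_def, mul_right_comm, Complex.mul_conj, mul_comm]
  exact Complex.re_ofReal_mul _ _

lemma sum_normSq_eigenvectorUnitary (hA : A.IsHermitian) (i : d) :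
    ∑ x, Complex.normSq (hA.eigenvectorUnitary.1 x i) = 1 := by
  have h := congrFun (congrFun (Unitary.coe_star_mul_self hA.eigenvectorUnitary) i) i
  rw [Matrix.mul_apply, Matrix.one_apply_eq] at h
  have := congrArg Complex.re h
  simp only [Matrix.star_apply, Complex.re_sum, RCLike.star_def,
    ← Complex.normSq_eq_conj_mul_self] at this
  exact_mod_cast this

/-- The diagonal of a Hermitian matrix is a doubly stochastic average of its eigenvalues. -/
lemma sum_mul_re_diag_le_traceNorm (hA : A.IsHermitian) {s : d → ℝ} (hs : ∀ x, |s x| ≤ 1) :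
    ∑ x, s x * (A x x).re ≤ traceNorm A := by
  set W := hA.eigenvectorUnitary.1
  have hcol (i : d) : |∑ x, s x * Complex.normSq (W x i)| ≤ 1 := by
    calc |∑ x, s x * Complex.normSq (W x i)|
        ≤ ∑ x, |s x| * Complex.normSq (W x i) := by
          refine (Finset.abs_sum_le_sum_abs _ _).trans_eq ?_
          simp only [abs_mul, abs_of_nonneg (Complex.normSq_nonneg _)]
      _ ≤ ∑ x, Complex.normSq (W x i) :=
          Finset.sum_le_sum fun x _ => mul_le_of_le_one_left (Complex.normSq_nonneg _) (hs x)
      _ = 1 := hA.sum_normSq_eigenvectorUnitary i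
  calc ∑ x, s x * (A x x).re
      = ∑ i, hA.eigenvalues i * ∑ x, s x * Complex.normSq (W x i) := by
        simp only [hA.re_diag_eq_sum_eigenvalues, Finset.mul_sum]
        rw [Finset.sum_comm]
        exact Finset.sum_congr rfl fun i _ => Finset.sum_congr rfl fun x _ => by ring
    _ ≤ ∑ i, |hA.eigenvalues i| := Finset.sum_le_sum fun i _ => (le_abs_self _).trans <| by
        rw [abs_mul]; exact mul_le_of_le_one_right (abs_nonneg _) (hcol i)
    _ = traceNorm A := hA.traceNorm_eq_sum_abs_eigenvalues.symm

end Matrix.IsHermitian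

namespace FinProb

variable {α ι : Type*} [Fintype α] [Fintype ι] {p q : α → ℝ}

def expect (p f : α → ℝ) : ℝ := ∑ x, f x * p x

def variance (p f : α → ℝ) : ℝ := expect p fun x => (f x - expect p f) ^ 2

def covar (p f g : α → ℝ) : ℝ := expect p (fun x => f x * g x) - expect p f * expect p g

lemma expect_mono (hp0 : ∀ x, 0 ≤ p x) {f g : α → ℝ} (hfg : ∀ x, f x ≤ g x) :
    expect p f ≤ expect p g :=
  Finset.sum_le_sum fun x _ => mul_le_mul_of_nonneg_right (hfg x) (hp0 x)

lemma expect_le_mul_variance (hp0 : ∀ x, 0 ≤ p x) {f o : α → ℝ} {c : ℝ}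
    (hf : ∀ x, f x ≤ c * (o x - expect p o) ^ 2) : expect p f ≤ c * variance p o := by
  refine (expect_mono hp0 hf).trans_eq ?_
  simp only [variance, expect, Finset.mul_sum, mul_assoc]

lemma abs_expect_le_one (hp0 : ∀ x, 0 ≤ p x) (hp1 : ∑ x, p x = 1) {f : α → ℝ}
    (hf : ∀ x, |f x| ≤ 1) : |expect p f| ≤ 1 := by
  calc |expect p f| ≤ ∑ x, |f x| * p x := by
        refine (Finset.abs_sum_le_sum_abs _ _).trans_eq ?_
        simp only [abs_mul, abs_of_nonneg (hp0 _)]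
    _ ≤ ∑ x, p x := Finset.sum_le_sum fun x _ => mul_le_of_le_one_left (hp0 x) (hf x)
    _ = 1 := hp1

lemma covar_le_two (hp0 : ∀ x, 0 ≤ p x) (hp1 : ∑ x, p x = 1) {f g : α → ℝ}
    (hf : ∀ x, |f x| ≤ 1) (hg : ∀ x, |g x| ≤ 1) : covar p f g ≤ 2 := by
  have hfg := abs_expect_le_one hp0 hp1 (f := fun x => f x * g x) fun x => by
    rw [abs_mul]; exact mul_le_one₀ (hf x) (abs_nonneg _) (hg x)
  have hf' := abs_expect_le_one hp0 hp1 hf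
  have hg' := abs_expect_le_one hp0 hp1 hg
  have : |expect p f * expect p g| ≤ 1 := by
    rw [abs_mul]; exact mul_le_one₀ hf' (abs_nonneg _) hg'
  unfold covar
  linarith [le_abs_self (expect p fun x => f x * g x), neg_abs_le (expect p f * expect p g)]

lemma variance_eq (hp1 : ∑ x, p x = 1) (f : α → ℝ) :
    variance p f = expect p (fun x => f x ^ 2) - expect p f ^ 2 := by
  simp only [variance, expect]
  have h (x : α) : (f x - ∑ y, f y * p y) ^ 2 * p x
      = f x ^ 2 * p x - 2 * (∑ y, f y * p y) * (f x * p x) + (∑ y, f y * p y) ^ 2 * p x := by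
    ring
  simp only [h, Finset.sum_add_distrib, Finset.sum_sub_distrib, ← Finset.mul_sum, hp1]
  ring

lemma variance_mul_sum_eq (hp1 : ∑ x, p x = 1) (c : ℝ) (f : ι → α → ℝ) :
    variance p (fun x => c * ∑ i, f i x) = c ^ 2 * ∑ i, ∑ j, covar p (f i) (f j) := by
  have hmean : expect p (fun x => c * ∑ i, f i x) = c * ∑ i, expect p (f i) := by
    simp only [expect, Finset.mul_sum, Finset.sum_mul]
    rw [Finset.sum_comm]
    exact Finset.sum_congr rfl fun i _ => Finset.sum_congr rfl fun x _ => by ring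
  have hsq : expect p (fun x => (c * ∑ i, f i x) ^ 2)
      = c ^ 2 * ∑ i, ∑ j, expect p (fun x => f i x * f j x) := by
    simp only [expect, Finset.mul_sum, Finset.sum_mul, pow_two]
    rw [Finset.sum_comm]
    refine Finset.sum_congr rfl fun i _ => ?_
    rw [Finset.sum_comm]
    exact Finset.sum_congr rfl fun j _ => Finset.sum_congr rfl fun x _ => by ring
  rw [variance_eq hp1, hsq, hmean, mul_pow, pow_two (∑ i, _), Finset.sum_mul_sum, ← mul_sub,
    ← Finset.sum_sub_distrib]
  simp only [covar, Finset.sum_sub_distrib]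

lemma variance_mul_sum_le (hp0 : ∀ x, 0 ≤ p x) (hp1 : ∑ x, p x = 1) (c : ℝ)
    {f : ι → α → ℝ} (hf : ∀ i x, |f i x| ≤ 1) (B : Finset (ι × ι))
    (hB : ∀ i j, (i, j) ∉ B → covar p (f i) (f j) = 0) :
    variance p (fun x => c * ∑ i, f i x) ≤ 2 * c ^ 2 * B.card := by
  classical
  have hle (i j : ι) : covar p (f i) (f j) ≤ if (i, j) ∈ B then 2 else 0 := by
    split_ifs with h
    · exact covar_le_two hp0 hp1 (hf i) (hf j)
    · exact (hB i j h).le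
  have hsum : ∑ i, ∑ j, covar p (f i) (f j) ≤ 2 * B.card := by
    calc ∑ i, ∑ j, covar p (f i) (f j)
        ≤ ∑ q : ι × ι, if q ∈ B then (2 : ℝ) else 0 := by
          rw [← Finset.univ_product_univ, Finset.sum_product]
          exact Finset.sum_le_sum fun i _ => Finset.sum_le_sum fun j _ => hle i j
      _ = 2 * B.card := by
          rw [Finset.sum_ite_mem, Finset.univ_inter, Finset.sum_const, nsmul_eq_mul, mul_comm]
  rw [variance_mul_sum_eq hp1]
  nlinarith [mul_le_mul_of_nonneg_left hsum (sq_nonneg c)]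

/-- The witness thresholds `o` at the midpoint of the two means; by Chebyshev each distribution
puts mass at most `4 v / ε²` on the wrong side. -/
lemma exists_sign_sum_mul_sub_ge (hp0 : ∀ x, 0 ≤ p x) (hp1 : ∑ x, p x = 1)
    (hq0 : ∀ x, 0 ≤ q x) (hq1 : ∑ x, q x = 1) {o : α → ℝ} {v ε : ℝ} (hε : 0 < ε)
    (hvp : variance p o ≤ v) (hvq : variance q o ≤ v)
    (hgap : ε < |expect p o - expect q o|) :
    ∃ s : α → ℝ, (∀ x, |s x| ≤ 1) ∧
      2 * (1 - 8 * v / ε ^ 2) ≤ ∑ x, s x * (p x - q x) := by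
  wlog hlt : expect q o < expect p o generalizing p q
  · obtain ⟨s, hs, hsum⟩ := this hq0 hq1 hp0 hp1 hvq hvp (by rwa [abs_sub_comm])
      (by push Not at hlt; rcases hlt.lt_or_eq with h | h
          · exact h
          · rw [h, sub_self, abs_zero] at hgap; linarith)
    refine ⟨fun x => -s x, fun x => by rw [abs_neg]; exact hs x, ?_⟩
    simpa only [neg_mul_comm, neg_sub] using hsum
  set a := expect p o
  set b := expect q o
  set m := (a + b) / 2 with hm
  have hab : ε < a - b := by rwa [abs_of_pos (sub_pos.mpr hlt)] at hgap
  set s : α → ℝ := fun x => if m ≤ o x then 1 else -1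
  have hε2 : 0 < 8 / ε ^ 2 := by positivity
  have hfar {y c : ℝ} (h : ε / 2 < |y - c|) : 2 ≤ 8 / ε ^ 2 * (y - c) ^ 2 := by
    rw [div_mul_eq_mul_div, le_div_iff₀ (by positivity), ← sq_abs (y - c)]
    nlinarith [abs_nonneg (y - c)]
  have hp (x : α) : 1 - s x ≤ 8 / ε ^ 2 * (o x - a) ^ 2 := by
    by_cases h : m ≤ o x
    · simp only [s, if_pos h, sub_self]; positivity
    · simp only [s, if_neg h]
      have : ε / 2 < |o x - a| := by rw [abs_sub_comm, abs_of_pos] <;> linarith [hm]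
      linarith [hfar this]
  have hq (x : α) : 1 + s x ≤ 8 / ε ^ 2 * (o x - b) ^ 2 := by
    by_cases h : m ≤ o x
    · simp only [s, if_pos h]
      have : ε / 2 < |o x - b| := by rw [abs_of_pos] <;> linarith [hm]
      linarith [hfar this]
    · simp only [s, if_neg h, add_neg_cancel]; positivity
  have hPp := (expect_le_mul_variance hp0 hp).trans (mul_le_mul_of_nonneg_left hvp hε2.le)
  have hPq := (expect_le_mul_variance hq0 hq).trans (mul_le_mul_of_nonneg_left hvq hε2.le)
  have hsplit : ∑ x, s x * (p x - q x)
      = 2 - expect p (fun x => 1 - s x) - expect q (fun x => 1 + s x) := by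
    simp only [expect, sub_mul, add_mul, one_mul, mul_sub, Finset.sum_sub_distrib,
      Finset.sum_add_distrib, hp1, hq1]
    ring
  refine ⟨s, fun x => by simp only [s]; split_ifs <;> norm_num, ?_⟩
  rw [hsplit]
  have : 8 * v / ε ^ 2 = 8 / ε ^ 2 * v := by ring
  linarith

end FinProb

section Support

variable {n : ℕ}

def patch (S : Finset (Fin n)) (u : S → Fin 2) (x : Fin n → Fin 2) : Fin n → Fin 2 :=
  fun i => if h : i ∈ S then u ⟨i, h⟩ else x i

variable {S T : Finset (Fin n)}

lemma patch_of_mem (u : S → Fin 2) (x : Fin n → Fin 2) {i : Fin n} (h : i ∈ S) :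
    patch S u x i = u ⟨i, h⟩ := dif_pos h

lemma patch_of_notMem (u : S → Fin 2) (x : Fin n → Fin 2) {i : Fin n} (h : i ∉ S) :
    patch S u x i = x i := dif_neg h

lemma restrict_patch (u : S → Fin 2) (x : Fin n → Fin 2) : (fun i : S => patch S u x i) = u :=
  funext fun i => patch_of_mem u x i.2

lemma patch_restrict {x z : Fin n → Fin 2} (h : ∀ i, i ∉ S → z i = x i) :
    patch S (fun i : S => z i) x = z := by
  funext i
  by_cases hi : i ∈ S
  · exact patch_of_mem _ x hi
  · rw [patch_of_notMem _ x hi, h i hi]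

lemma eq_iff_restrict_eq_and_eqOff (S : Finset (Fin n)) (x y : Fin n → Fin 2) :
    x = y ↔ (fun i : S => x i) = (fun i : S => y i) ∧ ∀ i, i ∉ S → x i = y i := by
  refine ⟨fun h => ⟨h ▸ rfl, fun i _ => h ▸ rfl⟩, fun ⟨hS, hS'⟩ => funext fun i => ?_⟩
  by_cases hi : i ∈ S
  · exact congrFun hS ⟨i, hi⟩
  · exact hS' i hi

lemma sum_mul_ite_eqOff (G : (Fin n → Fin 2) → ℂ) (x : Fin n → Fin 2) :
    ∑ z, G z * (if ∀ i, i ∉ S → z i = x i then 1 else 0) =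
      ∑ u : S → Fin 2, G (patch S u x) := by
  simp only [mul_ite, mul_one, mul_zero, ← Finset.sum_filter]
  refine Finset.sum_nbij' (fun z i => z i.1) (fun u => patch S u x) (by simp)
    (fun u _ => Finset.mem_filter.2 ⟨Finset.mem_univ _, fun i hi => patch_of_notMem u x hi⟩)
    (fun z hz => patch_restrict (Finset.mem_filter.1 hz).2) (fun u _ => restrict_patch u x)
    (fun z hz => by rw [patch_restrict (Finset.mem_filter.1 hz).2])

namespace SupportedOn

variable {A B : QOp n}

lemma mono (hST : S ⊆ T) (hA : SupportedOn A S) : SupportedOn A T := by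
  obtain ⟨f, hf⟩ := hA
  refine ⟨fun u v => (if ∀ i : T, i.1 ∉ S → u i = v i then 1 else 0) *
    f (fun i => u ⟨i, hST i.2⟩) (fun i => v ⟨i, hST i.2⟩), fun x y => ?_⟩
  have hiff : (∀ i, i ∉ S → x i = y i) ↔
      (∀ i : T, i.1 ∉ S → x i = y i) ∧ ∀ i, i ∉ T → x i = y i := by
    refine ⟨fun h => ⟨fun i hi => h i hi, fun i hi => h i fun hS => hi (hST hS)⟩,
      fun h i hi => ?_⟩
    by_cases hT : i ∈ T
    · exact h.1 ⟨i, hT⟩ hi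
    · exact h.2 i hT
  rw [hf, if_congr hiff rfl rfl]
  dsimp only
  split_ifs <;> simp_all

lemma conjTranspose (hA : SupportedOn A S) : SupportedOn Aᴴ S := by
  obtain ⟨f, hf⟩ := hA
  refine ⟨fun u v => star (f v u), fun x y => ?_⟩
  rw [Matrix.conjTranspose_apply, hf, star_mul]
  simp only [eq_comm (a := x _), apply_ite star, star_one, star_zero, mul_comm]

lemma mul (hA : SupportedOn A S) (hB : SupportedOn B S) : SupportedOn (A * B) S := by
  obtain ⟨f, hf⟩ := hA
  obtain ⟨g, hg⟩ := hB
  refine ⟨fun u v => ∑ w : S → Fin 2, f u w * g w v, fun x y => ?_⟩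
  have hxz (z : Fin n → Fin 2) : A x z * B z y = f (fun i => x i) (fun i => z i) *
      g (fun i => z i) (fun i => y i) * (if ∀ i, i ∉ S → z i = y i then 1 else 0) *
      (if ∀ i, i ∉ S → z i = x i then 1 else 0) := by
    rw [hf, hg]
    simp only [eq_comm (a := x _)]
    ring
  have hpatch (u : S → Fin 2) :
      (∀ i, i ∉ S → patch S u x i = y i) ↔ ∀ i, i ∉ S → x i = y i :=
    forall₂_congr fun i hi => by rw [patch_of_notMem u x hi]
  simp only [Matrix.mul_apply, hxz, sum_mul_ite_eqOff, restrict_patch, if_congr (hpatch _) rfl rfl,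
    Finset.sum_mul]

lemma mul_apply_of_disjoint {f : (S → Fin 2) → (S → Fin 2) → ℂ}
    {g : (T → Fin 2) → (T → Fin 2) → ℂ}
    (hf : ∀ x y, A x y = f (fun i => x i.1) (fun i => y i.1) *
      (if ∀ i, i ∉ S → x i = y i then 1 else 0))
    (hg : ∀ x y, B x y = g (fun i => x i.1) (fun i => y i.1) *
      (if ∀ i, i ∉ T → x i = y i then 1 else 0))
    (hST : Disjoint S T) (x y : Fin n → Fin 2) :
    (A * B) x y = f (fun i => x i) (fun i => y i) * g (fun i => x i) (fun i => y i) *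
      (if ∀ i, i ∉ S ∪ T → x i = y i then 1 else 0) := by
  have hxz (z : Fin n → Fin 2) : A x z * B z y = f (fun i => x i) (fun i => z i) *
      (g (fun i => z i) (fun i => y i) * (if ∀ i, i ∉ T → z i = y i then 1 else 0)) *
      (if ∀ i, i ∉ S → z i = x i then 1 else 0) := by
    rw [hf, hg]
    simp only [eq_comm (a := x _)]
    ring
  rw [Matrix.mul_apply]
  simp only [hxz]
  rw [sum_mul_ite_eqOff, Finset.sum_eq_single (fun i : S => y i)]
  · have hT : (fun i : T => patch S (fun j : S => y j) x i) = fun i : T => x i :=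
      funext fun i => patch_of_notMem _ x (Finset.disjoint_right.mp hST i.2)
    have hcond : (∀ i, i ∉ T → patch S (fun j : S => y j) x i = y i) ↔
        ∀ i, i ∉ S ∪ T → x i = y i := by
      simp only [Finset.mem_union, not_or]
      refine ⟨fun h i hi => by rw [← h i hi.2, patch_of_notMem _ x hi.1], fun h i hi => ?_⟩
      by_cases hS : i ∈ S
      · exact patch_of_mem _ x hS
      · rw [patch_of_notMem _ x hS, h i ⟨hS, hi⟩]
    rw [restrict_patch, hT, if_congr hcond rfl rfl]
    ring
  · intro u _ hu
    have : ¬ ∀ i, i ∉ T → patch S u x i = y i := fun h => hu <| funext fun i => by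
      rw [← h i (Finset.disjoint_left.mp hST i.2), patch_of_mem u x i.2]
    rw [if_neg this, mul_zero, mul_zero]
  · simp

lemma commute_of_disjoint (hA : SupportedOn A S) (hB : SupportedOn B T) (hST : Disjoint S T) :
    Commute A B := by
  obtain ⟨f, hf⟩ := hA
  obtain ⟨g, hg⟩ := hB
  ext x y
  rw [mul_apply_of_disjoint hf hg hST, mul_apply_of_disjoint hg hf hST.symm, Finset.union_comm]
  ring

lemma mul_apply_self_of_disjoint (hA : SupportedOn A S) (hB : SupportedOn B T)
    (hST : Disjoint S T) (x : Fin n → Fin 2) : (A * B) x x = A x x * B x x := by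
  obtain ⟨f, hf⟩ := hA
  obtain ⟨g, hg⟩ := hB
  simp [mul_apply_of_disjoint hf hg hST, hf, hg]

end SupportedOn

end Support

section Lightcone

variable {α : Type*} [DecidableEq α]

def lightconeStep (gs : List (Finset α)) (S : Finset α) : Finset α :=
  S ∪ (gs.toFinset.filter fun T => ¬ Disjoint T S).biUnion id

def lightcone : List (List (Finset α)) → Finset α → Finset α
  | [], S => S
  | gs :: Ls, S => lightcone Ls (lightconeStep gs S)

/-- Contains every `i` whose lightcone meets `S` (`lightcone_swap`); this is how overlapping
pairs of lightcones are counted. -/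
def lightconeRev : List (List (Finset α)) → Finset α → Finset α
  | [], S => S
  | gs :: Ls, S => lightconeStep gs (lightconeRev Ls S)

def IsLayering (r : ℕ) (Ls : List (List (Finset α))) : Prop :=
  ∀ gs ∈ Ls, (∀ T ∈ gs, T.card ≤ r) ∧ gs.Pairwise Disjoint

variable {gs : List (Finset α)} {S R T : Finset α}

lemma subset_lightconeStep : S ⊆ lightconeStep gs S := Finset.subset_union_left

lemma subset_lightconeStep_of_mem (hT : T ∈ gs) (hTS : ¬ Disjoint T S) :
    T ⊆ lightconeStep gs S := fun _ ha => Finset.mem_union_right _ <|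
  Finset.mem_biUnion.2 ⟨T, Finset.mem_filter.2 ⟨List.mem_toFinset.2 hT, hTS⟩, ha⟩

lemma mem_lightconeStep {a : α} :
    a ∈ lightconeStep gs S ↔ a ∈ S ∨ ∃ T ∈ gs, ¬ Disjoint T S ∧ a ∈ T := by
  simp [lightconeStep, and_assoc]

lemma lightconeStep_subset_cons {g : Finset α} :
    lightconeStep gs S ⊆ lightconeStep (g :: gs) S := by
  intro a ha
  rcases mem_lightconeStep.1 ha with ha | ⟨T, hT, hTS, haT⟩
  · exact subset_lightconeStep ha
  · exact subset_lightconeStep_of_mem (List.mem_cons_of_mem _ hT) hTS haT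

lemma lightconeStep_union_subset_cons {g : Finset α} (hg : ¬ Disjoint g S)
    (hgs : ∀ T ∈ gs, Disjoint T g) :
    lightconeStep gs (S ∪ g) ⊆ lightconeStep (g :: gs) S := by
  intro a ha
  rcases mem_lightconeStep.1 ha with ha | ⟨T, hT, hTS, haT⟩
  · rcases Finset.mem_union.1 ha with ha | ha
    · exact subset_lightconeStep ha
    · exact subset_lightconeStep_of_mem List.mem_cons_self hg ha
  · refine subset_lightconeStep_of_mem (List.mem_cons_of_mem _ hT) (fun hd => hTS ?_) haT
    exact Finset.disjoint_union_right.2 ⟨hd, hgs T hT⟩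

lemma lightconeStep_swap (h : ¬ Disjoint (lightconeStep gs S) R) :
    ¬ Disjoint S (lightconeStep gs R) := by
  obtain ⟨a, haC, haR⟩ := Finset.not_disjoint_iff.1 h
  rw [Finset.not_disjoint_iff]
  rcases mem_lightconeStep.1 haC with haS | ⟨T, hT, hTS, haT⟩
  · exact ⟨a, haS, subset_lightconeStep haR⟩
  · obtain ⟨b, hbT, hbS⟩ := Finset.not_disjoint_iff.1 hTS
    exact ⟨b, hbS,
      subset_lightconeStep_of_mem hT (Finset.not_disjoint_iff.2 ⟨a, haT, haR⟩) hbT⟩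

lemma card_lightconeStep_le {r : ℕ} (hcard : ∀ T ∈ gs, T.card ≤ r)
    (hdisj : gs.Pairwise Disjoint) :
    (lightconeStep gs S).card ≤ (r + 1) * S.card := by
  set F := gs.toFinset.filter fun T => ¬ Disjoint T S
  have hFdisj : (F : Set (Finset α)).PairwiseDisjoint id := fun T hT T' hT' hne => by
    simp only [F, Finset.coe_filter, List.mem_toFinset] at hT hT'
    have : Std.Symm (α := Finset α) Disjoint := ⟨fun _ _ h => h.symm⟩
    exact hdisj.forall hT.1 hT'.1 hne
  -- distinct gates of `F` meet `S` in disjoint nonempty sets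
  have hF : F.card ≤ S.card := by
    calc F.card ≤ ∑ T ∈ F, (T ∩ S).card := by
          rw [Finset.card_eq_sum_ones]
          exact Finset.sum_le_sum fun T hT => Finset.card_pos.2
            (Finset.not_disjoint_iff_nonempty_inter.1 (Finset.mem_filter.1 hT).2)
      _ = (F.biUnion (· ∩ S)).card := (Finset.card_biUnion fun T hT T' hT' hne =>
          (hFdisj hT hT' hne).mono Finset.inter_subset_left Finset.inter_subset_left).symm
      _ ≤ S.card :=
          Finset.card_le_card (Finset.biUnion_subset.2 fun _ _ => Finset.inter_subset_right)
  calc (lightconeStep gs S).card ≤ S.card + ∑ T ∈ F, T.card :=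
        (Finset.card_union_le _ _).trans (Nat.add_le_add_left Finset.card_biUnion_le _)
    _ ≤ S.card + r * F.card := by
        refine Nat.add_le_add_left ?_ _
        rw [mul_comm, ← smul_eq_mul, ← Finset.sum_const]
        exact Finset.sum_le_sum fun T hT =>
          hcard T (List.mem_toFinset.1 (Finset.mem_filter.1 hT).1)
    _ ≤ (r + 1) * S.card := by nlinarith

lemma lightcone_swap : ∀ {Ls : List (List (Finset α))} {S R : Finset α},
    ¬ Disjoint (lightcone Ls S) R → ¬ Disjoint S (lightconeRev Ls R)
  | [], _, _, h => h
  | _ :: _, _, _, h => lightconeStep_swap (lightcone_swap h)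

variable {r : ℕ} {Ls : List (List (Finset α))}

lemma card_lightcone_le (hLs : IsLayering r Ls) :
    (lightcone Ls S).card ≤ (r + 1) ^ Ls.length * S.card := by
  induction Ls generalizing S with
  | nil => simp [lightcone]
  | cons gs Ls ih =>
    have h := hLs gs List.mem_cons_self
    calc (lightcone (gs :: Ls) S).card
        ≤ (r + 1) ^ Ls.length * (lightconeStep gs S).card :=
          ih fun l hl => hLs l (List.mem_cons_of_mem _ hl)
      _ ≤ (r + 1) ^ Ls.length * ((r + 1) * S.card) :=
          Nat.mul_le_mul_left _ (card_lightconeStep_le h.1 h.2)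
      _ = (r + 1) ^ (gs :: Ls).length * S.card := by rw [List.length_cons, pow_succ]; ring

lemma card_lightconeRev_le (hLs : IsLayering r Ls) :
    (lightconeRev Ls S).card ≤ (r + 1) ^ Ls.length * S.card := by
  induction Ls with
  | nil => simp [lightconeRev]
  | cons gs Ls ih =>
    have h := hLs gs List.mem_cons_self
    calc (lightconeRev (gs :: Ls) S).card ≤ (r + 1) * (lightconeRev Ls S).card :=
          card_lightconeStep_le h.1 h.2
      _ ≤ (r + 1) * ((r + 1) ^ Ls.length * S.card) :=
          Nat.mul_le_mul_left _ (ih fun l hl => hLs l (List.mem_cons_of_mem _ hl))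
      _ = (r + 1) ^ (gs :: Ls).length * S.card := by rw [List.length_cons, pow_succ]; ring

lemma card_filter_not_disjoint_lightcone_le [Fintype α] {r : ℕ} {Ls : List (List (Finset α))}
    (hLs : IsLayering r Ls) :
    (Finset.univ.filter fun q : α × α =>
      ¬ Disjoint (lightcone Ls {q.1}) (lightcone Ls {q.2})).card
      ≤ (r + 1) ^ (2 * Ls.length) * Fintype.card α := by
  have hsub : (Finset.univ.filter fun q : α × α =>
      ¬ Disjoint (lightcone Ls {q.1}) (lightcone Ls {q.2})) ⊆
      Finset.univ.biUnion fun j => lightconeRev Ls (lightcone Ls {j}) ×ˢ {j} := fun q hq => by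
    have h := lightcone_swap (Finset.mem_filter.1 hq).2
    rw [Finset.disjoint_singleton_left, not_not] at h
    exact Finset.mem_biUnion.2
      ⟨q.2, Finset.mem_univ _, Finset.mem_product.2 ⟨h, Finset.mem_singleton_self _⟩⟩
  calc _ ≤ ∑ j, (lightconeRev Ls (lightcone Ls {j}) ×ˢ {j}).card :=
        (Finset.card_le_card hsub).trans Finset.card_biUnion_le
    _ ≤ ∑ _j : α, (r + 1) ^ (2 * Ls.length) := Finset.sum_le_sum fun j _ => by
        rw [Finset.card_product, Finset.card_singleton, mul_one, two_mul, pow_add]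
        refine (card_lightconeRev_le hLs).trans (Nat.mul_le_mul_left _ ?_)
        simpa using card_lightcone_le (S := {j}) hLs
    _ = (r + 1) ^ (2 * Ls.length) * Fintype.card α := by
        rw [Finset.sum_const, Finset.card_univ, smul_eq_mul, mul_comm]

end Lightcone

section Circuit

variable {n : ℕ} {A L U : QOp n} {S : Finset (Fin n)}

lemma conjTranspose_mul_mul_eq_of_disjoint {g : QOp n} {T : Finset (Fin n)}
    (hu : g ∈ Matrix.unitaryGroup (Fin n → Fin 2) ℂ) (hg : SupportedOn g T)
    (hA : SupportedOn A S) (hST : Disjoint S T) : gᴴ * A * g = A := by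
  rw [Matrix.mul_assoc, (hA.commute_of_disjoint hg hST).eq, ← Matrix.mul_assoc,
    ← Matrix.star_eq_conjTranspose, Matrix.UnitaryGroup.star_mul_self ⟨g, hu⟩, Matrix.one_mul]

lemma IsLayer.mem_unitaryGroup {gates : List (QOp n × Finset (Fin n))} (hL : IsLayer L gates) :
    L ∈ Matrix.unitaryGroup (Fin n → Fin 2) ℂ := by
  rw [hL.1]
  exact Submonoid.list_prod_mem _ fun x hx => by
    obtain ⟨g, hg, rfl⟩ := List.mem_map.1 hx
    exact (hL.2.1 g hg).1

lemma IsLayer.supportedOn_conj {gates : List (QOp n × Finset (Fin n))} (hL : IsLayer L gates)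
    (hA : SupportedOn A S) : SupportedOn (Lᴴ * A * L) (lightconeStep (gates.map Prod.snd) S) := by
  obtain ⟨rfl, hgates, hpair⟩ := hL
  induction gates generalizing A S with
  | nil =>
    simpa only [List.map_nil, List.prod_nil, Matrix.conjTranspose_one, Matrix.one_mul,
      Matrix.mul_one] using hA.mono subset_lightconeStep
  | cons g gates ih =>
    obtain ⟨hgu, hgS, -⟩ := hgates g List.mem_cons_self
    have ih' {A' : QOp n} {S' : Finset (Fin n)} (h : SupportedOn A' S') :=
      ih h (fun x hx => hgates x (List.mem_cons_of_mem _ hx)) (List.pairwise_cons.1 hpair).2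
    have hconj : ((g :: gates).map Prod.fst).prod ᴴ * A * ((g :: gates).map Prod.fst).prod =
        (gates.map Prod.fst).prod ᴴ * (g.1ᴴ * A * g.1) * (gates.map Prod.fst).prod := by
      simp only [List.map_cons, List.prod_cons, Matrix.conjTranspose_mul, Matrix.mul_assoc]
    rw [hconj]
    by_cases hd : Disjoint g.2 S
    · rw [conjTranspose_mul_mul_eq_of_disjoint hgu hgS hA hd.symm]
      exact (ih' hA).mono lightconeStep_subset_cons
    · have hA' : SupportedOn (g.1ᴴ * A * g.1) (S ∪ g.2) :=
        ((hgS.conjTranspose.mono Finset.subset_union_right).mul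
          (hA.mono Finset.subset_union_left)).mul (hgS.mono Finset.subset_union_right)
      refine (ih' hA').mono (lightconeStep_union_subset_cons hd fun T hT => ?_)
      obtain ⟨h, hh, rfl⟩ := List.mem_map.1 hT
      exact ((List.pairwise_cons.1 hpair).1 h hh).symm

lemma supportedOn_conj_prod (Ls : List (QOp n × List (QOp n × Finset (Fin n))))
    (hLs : ∀ L ∈ Ls, IsLayer L.1 L.2) (hA : SupportedOn A S) :
    SupportedOn ((Ls.map Prod.fst).prod ᴴ * A * (Ls.map Prod.fst).prod)
      (lightcone (Ls.map fun L => L.2.map Prod.snd) S) := by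
  induction Ls generalizing A S with
  | nil =>
    simpa only [List.map_nil, List.prod_nil, Matrix.conjTranspose_one, Matrix.one_mul,
      Matrix.mul_one, lightcone] using hA
  | cons L Ls ih =>
    have hconj : ((L :: Ls).map Prod.fst).prod ᴴ * A * ((L :: Ls).map Prod.fst).prod =
        (Ls.map Prod.fst).prod ᴴ * (L.1ᴴ * A * L.1) * (Ls.map Prod.fst).prod := by
      simp only [List.map_cons, List.prod_cons, Matrix.conjTranspose_mul, Matrix.mul_assoc]
    rw [hconj]
    exact ih (fun L' hL' => hLs L' (List.mem_cons_of_mem _ hL'))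
      ((hLs L List.mem_cons_self).supportedOn_conj hA)

lemma HasDepth.mem_unitaryGroup {k : ℕ} (hU : HasDepth U k) :
    U ∈ Matrix.unitaryGroup (Fin n → Fin 2) ℂ := by
  obtain ⟨layers, rfl, hlayers⟩ := hU
  exact Submonoid.list_prod_mem _ fun L hL => by
    obtain ⟨j, rfl⟩ := List.mem_ofFn.1 hL
    exact (hlayers j).choose_spec.mem_unitaryGroup

lemma HasDepth.exists_lightcone {k : ℕ} (hU : HasDepth U k) :
    ∃ Ls : List (List (Finset (Fin n))), Ls.length = k ∧ IsLayering 2 Ls ∧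
      ∀ (A : QOp n) (S : Finset (Fin n)), SupportedOn A S →
        SupportedOn (Uᴴ * A * U) (lightcone Ls S) := by
  obtain ⟨layers, rfl, hlayers⟩ := hU
  choose gates hgates using hlayers
  refine ⟨List.ofFn fun j => (gates j).map Prod.snd, List.length_ofFn, fun gs hgs => ?_,
    fun A S hA => ?_⟩
  · obtain ⟨j, rfl⟩ := List.mem_ofFn.1 hgs
    refine ⟨fun T hT => ?_, List.pairwise_map.2 (hgates j).2.2⟩
    obtain ⟨g, hg, rfl⟩ := List.mem_map.1 hT
    exact ((hgates j).2.1 g hg).2.2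
  · have h := supportedOn_conj_prod (List.ofFn fun j => (layers j, gates j))
      (fun L hL => by obtain ⟨j, rfl⟩ := List.mem_ofFn.1 hL; exact hgates j) hA
    simpa only [List.map_ofFn, Function.comp_def] using h

end Circuit

section Statistics

open FinProb

variable {n : ℕ}

/-- Born probabilities of a computational-basis measurement of `U|0ⁿ⟩`. -/
def outcomeProb (U : QOp n) (x : Fin n → Fin 2) : ℝ := Complex.normSq (U x fun _ => 0)

def zsign (i : Fin n) (x : Fin n → Fin 2) : ℝ := if x i = 0 then 1 else -1

/-- Eigenvalue of `O = (1/n) ∑ᵢ Zᵢ` on the basis state `x`. -/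
noncomputable def avgZ (n : ℕ) (x : Fin n → Fin 2) : ℝ := (n : ℝ)⁻¹ * ∑ i, zsign i x

lemma outcomeProb_nonneg (U : QOp n) (x : Fin n → Fin 2) : 0 ≤ outcomeProb U x :=
  Complex.normSq_nonneg _

lemma sum_outcomeProb {U : QOp n} (hU : U ∈ Matrix.unitaryGroup (Fin n → Fin 2) ℂ) :
    ∑ x, outcomeProb U x = 1 := by
  have h := congrFun (congrFun (Matrix.UnitaryGroup.star_mul_self ⟨U, hU⟩) fun _ => 0)
    fun _ => 0
  rw [Matrix.mul_apply, Matrix.one_apply_eq] at h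
  have := congrArg Complex.re h
  simp only [Matrix.star_apply, Complex.re_sum, RCLike.star_def,
    ← Complex.normSq_eq_conj_mul_self] at this
  exact_mod_cast this

lemma conjTranspose_mul_diagonal_mul_apply_zero (U : QOp n) (f : (Fin n → Fin 2) → ℝ) :
    (Uᴴ * Matrix.diagonal (fun x => (f x : ℂ)) * U) (fun _ => 0) (fun _ => 0)
      = expect (outcomeProb U) f := by
  rw [Matrix.mul_apply]
  simp only [Matrix.mul_diagonal, Matrix.conjTranspose_apply, expect,
    outcomeProb, Complex.ofReal_sum, Complex.ofReal_mul, Complex.normSq_eq_conj_mul_self,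
    RCLike.star_def]
  exact Finset.sum_congr rfl fun x _ => by ring

lemma covar_outcomeProb_eq_zero {U : QOp n} (hU : U ∈ Matrix.unitaryGroup (Fin n → Fin 2) ℂ)
    {f g : (Fin n → Fin 2) → ℝ} {S T : Finset (Fin n)}
    (hf : SupportedOn (Uᴴ * Matrix.diagonal (fun x => (f x : ℂ)) * U) S)
    (hg : SupportedOn (Uᴴ * Matrix.diagonal (fun x => (g x : ℂ)) * U) T) (hST : Disjoint S T) :
    covar (outcomeProb U) f g = 0 := by
  have hUU : U * Uᴴ = 1 := by
    rw [← Matrix.star_eq_conjTranspose]; exact Unitary.mul_star_self_of_mem hU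
  have hsplit : Uᴴ * Matrix.diagonal (fun x => ((f x * g x : ℝ) : ℂ)) * U =
      (Uᴴ * Matrix.diagonal (fun x => (f x : ℂ)) * U) *
        (Uᴴ * Matrix.diagonal (fun x => (g x : ℂ)) * U) := by
    calc _ = Uᴴ * Matrix.diagonal (fun x => (f x : ℂ)) * (U * Uᴴ) *
          Matrix.diagonal (fun x => (g x : ℂ)) * U := by
          simp only [hUU, Matrix.mul_one, Complex.ofReal_mul, Matrix.diagonal_mul_diagonal,
            Matrix.mul_assoc]
      _ = _ := by simp only [Matrix.mul_assoc]
  have h := conjTranspose_mul_diagonal_mul_apply_zero U fun x => f x * g x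
  rw [hsplit, hf.mul_apply_self_of_disjoint hg hST, conjTranspose_mul_diagonal_mul_apply_zero,
    conjTranspose_mul_diagonal_mul_apply_zero, ← Complex.ofReal_mul] at h
  rw [covar, ← Complex.ofReal_injective h, sub_self]

lemma abs_zsign_le_one (i : Fin n) (x : Fin n → Fin 2) : |zsign i x| ≤ 1 := by
  unfold zsign; split_ifs <;> norm_num

lemma Zmat_eq_diagonal (i : Fin n) : Zmat n i = Matrix.diagonal fun x => (zsign i x : ℂ) := by
  ext b c
  by_cases h : b = c
  · subst h; simp [Zmat, zsign, apply_ite (fun r : ℝ => (r : ℂ))]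
  · simp [Zmat, h]

lemma supportedOn_Zmat (i : Fin n) : SupportedOn (Zmat n i) {i} := by
  refine ⟨fun u v => if u = v then (if u ⟨i, Finset.mem_singleton_self i⟩ = 0 then 1 else -1)
    else 0, fun x y => ?_⟩
  simp only [Zmat, Matrix.of_apply, eq_iff_restrict_eq_and_eqOff {i} x y]
  split_ifs <;> simp_all

lemma variance_avgZ_le {U : QOp n} {k : ℕ} (hU : HasDepth U k) :
    variance (outcomeProb U) (avgZ n) ≤ 2 * 9 ^ k / n := by
  obtain ⟨Ls, hlen, hLs, hcone⟩ := hU.exists_lightcone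
  set B := Finset.univ.filter fun q : Fin n × Fin n =>
    ¬ Disjoint (lightcone Ls {q.1}) (lightcone Ls {q.2})
  have hB : (B.card : ℝ) ≤ 9 ^ k * n := by
    have := card_filter_not_disjoint_lightcone_le hLs
    rw [hlen, Fintype.card_fin, pow_mul] at this
    exact_mod_cast this
  have hvar := variance_mul_sum_le (outcomeProb_nonneg U) (sum_outcomeProb hU.mem_unitaryGroup)
    (n : ℝ)⁻¹ abs_zsign_le_one B fun i j hij => by
      refine covar_outcomeProb_eq_zero hU.mem_unitaryGroup ?_ ?_ (not_not.1 fun h =>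
        hij (Finset.mem_filter.2 ⟨Finset.mem_univ _, h⟩)) <;>
      · rw [← Zmat_eq_diagonal]; exact hcone _ _ (supportedOn_Zmat _)
  calc variance (outcomeProb U) (avgZ n) ≤ 2 * ((n : ℝ)⁻¹) ^ 2 * B.card := hvar
    _ ≤ 2 * ((n : ℝ)⁻¹) ^ 2 * (9 ^ k * n) := by gcongr
    _ = 2 * 9 ^ k / n := by
        rcases n.eq_zero_or_pos with rfl | hn
        · simp
        · field_simp

end Statistics

section Bridge

open FinProb

variable {n : ℕ}

lemma mulVec_indicator_zero (U : QOp n) :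
    U *ᵥ (fun b => if b = (fun _ => 0) then 1 else 0) = fun x => U x fun _ => 0 := by
  funext x
  simp [Matrix.mulVec, dotProduct]

lemma isHermitian_of_mul_star {d : Type*} (ψ : d → ℂ) :
    (Matrix.of fun b c => ψ b * starRingEnd ℂ (ψ c)).IsHermitian := by
  ext b c
  simp [mul_comm]

lemma smul_sum_Zmat_eq_diagonal :
    (n : ℂ)⁻¹ • ∑ i, Zmat n i = Matrix.diagonal fun x => (avgZ n x : ℂ) := by
  ext b c
  by_cases h : b = c
  · subst h; simp [Zmat_eq_diagonal, Matrix.sum_apply, avgZ]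
  · simp [Zmat_eq_diagonal, Matrix.sum_apply, h]

lemma re_trace_avgZ_mul_state (U : QOp n) :
    (((n : ℂ)⁻¹ • ∑ i, Zmat n i) * Matrix.of fun b c =>
      (U *ᵥ fun b => if b = (fun _ => 0) then 1 else 0) b *
        starRingEnd ℂ ((U *ᵥ fun b => if b = (fun _ => 0) then 1 else 0) c)).trace.re
      = expect (outcomeProb U) (avgZ n) := by
  simp only [smul_sum_Zmat_eq_diagonal, mulVec_indicator_zero, Matrix.trace, Matrix.diag_apply,
    Matrix.diagonal_mul, Matrix.of_apply, Complex.mul_conj, Complex.re_sum, expect, outcomeProb]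
  exact Finset.sum_congr rfl fun x _ => Complex.re_ofReal_mul _ _

end Bridge

/-- Constant-depth lower bound on trace distance: for `ρ = U|0ⁿ⟩⟨0ⁿ|Uᴴ`,
`σ = V|0ⁿ⟩⟨0ⁿ|Vᴴ` with `U, V` of depth at most `k` and `O = (1/n) ∑ᵢ Zᵢ`, if
`|tr(Oρ) - tr(Oσ)| > ε` then `½‖ρ - σ‖₁ ≥ 1 - C_k/(n ε²)` for a constant `C_k`
depending only on `k`. -/
theorem stmt15 : ∃ C : ℕ → ℝ, ∀ (k n : ℕ), 0 < n →
    ∀ U V : QOp n, HasDepth U k → HasDepth V k →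
    ∀ ε : ℝ, 0 < ε →
    let ψ : (Fin n → Fin 2) → ℂ :=
      U.mulVec (fun b => if b = (fun _ => 0) then 1 else 0)
    let φ : (Fin n → Fin 2) → ℂ :=
      V.mulVec (fun b => if b = (fun _ => 0) then 1 else 0)
    let ρ : QOp n := Matrix.of fun b c => ψ b * (starRingEnd ℂ) (ψ c)
    let σ : QOp n := Matrix.of fun b c => φ b * (starRingEnd ℂ) (φ c)
    let O : QOp n := (n : ℂ)⁻¹ • ∑ i, Zmat n i
    ε < |((O * ρ).trace).re - ((O * σ).trace).re| →
    1 - C k / (n * ε ^ 2) ≤ traceNorm (ρ - σ) / 2 := by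
  refine ⟨fun k => 16 * 9 ^ k, fun k n _ U V hU hV ε hε => ?_⟩
  intro ψ φ ρ σ O hgap
  rw [re_trace_avgZ_mul_state, re_trace_avgZ_mul_state] at hgap
  obtain ⟨s, hs, hsum⟩ := FinProb.exists_sign_sum_mul_sub_ge (outcomeProb_nonneg U)
    (sum_outcomeProb hU.mem_unitaryGroup) (outcomeProb_nonneg V)
    (sum_outcomeProb hV.mem_unitaryGroup) hε (variance_avgZ_le hU) (variance_avgZ_le hV) hgap
  have hdiag (x : Fin n → Fin 2) : ((ρ - σ) x x).re = outcomeProb U x - outcomeProb V x := by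
    simp [ρ, σ, ψ, φ, mulVec_indicator_zero, outcomeProb, Complex.mul_conj]
  have htrace : ∑ x, s x * ((ρ - σ) x x).re ≤ traceNorm (ρ - σ) :=
    ((isHermitian_of_mul_star ψ).sub (isHermitian_of_mul_star φ)).sum_mul_re_diag_le_traceNorm hs
  simp only [hdiag] at htrace
  have hC : 8 * (2 * 9 ^ k / n) / ε ^ 2 = (16 * 9 ^ k : ℝ) / (n * ε ^ 2) := by ring
  rw [hC] at hsum
  linarith
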